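/- Let X be a Banach space and K ⊆ X* nonempty, w*-compact, and convex. If 0 < δ < ε/8 and ζ is an ordinal with ζ < o_w(H^K_ε), then ζ·2 < o_w(H^K_δ). -/

import Mathlib

open NormedSpace

noncomputable def derivIter {α : Type*} (d : Set α → Set α) (K : Set α) : Ordinal → Set α :=
  fun ξ => Ordinal.limitRecOn ξ K (fun _ ih => d ih)
    (fun o _ ih => ⋂ ζ : Set.Iio o, ih ζ.1 ζ.2)

/-- The `D`-derivative of a set of finite sequences. -/
def derivD {Λ : Type*} (D : Set (Set Λ)) (H : Set (List Λ)) : Set (List Λ) :=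
  {t ∈ H | ∀ U ∈ D, ∃ x ∈ U, t ++ [x] ∈ H}

/-- The canonical basis of weak neighborhoods of `0` in `X`. -/
def weakBasis (X : Type*) [NormedAddCommGroup X] [NormedSpace ℝ X] : Set (Set X) :=
  {U | ∃ (F : Finset (StrongDual ℝ X)) (δ : ℝ), 0 < δ ∧ U = {x | ∀ f ∈ F, |f x| < δ}}

/-- The hereditary tree `H^K_ε` of finite sequences in the unit ball of `X` on which
some member of `K` is everywhere at least `ε`. -/
def HKtree {X : Type*} [NormedAddCommGroup X] [NormedSpace ℝ X]
    (K : Set (StrongDual ℝ X)) (ε : ℝ) : Set (List X) :=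
  {t | (∀ x ∈ t, ‖x‖ ≤ 1) ∧ ∃ f ∈ K, ∀ x ∈ t, ε ≤ f x}

/-- `o_D(H)`: least ordinal where the iterated `D`-derivative is empty (`0` if none). -/
noncomputable def ordD {Λ : Type*} (D : Set (Set Λ)) (H : Set (List Λ)) : Ordinal :=
  sInf {ξ | derivIter (derivD D) H ξ = ∅}

/-!
A tree `t ∈ (H^K_ε)^ζ_w` yields a functional `f₀` surviving `ζ` steps of a weak-star derivation
of `K` itself, in which `f` survives a step if it is a weak-star limit of functionals of the
current set that are `≥ ε` at vectors of the unit ball lying in arbitrarily small weak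
neighbourhoods of `0`; weak-star compactness of `K` carries this through successor and limit
stages. Conversely, any functional surviving `γ` steps at level `ρ` puts the empty tree in
`(H^K_σ)^γ_w` for `σ < ρ`, since being `> σ` on a finite tree is a weak-star open condition.

The doubling comes from convexity: `g ↦ (g + f)/2` maps the derivation at level `ε` into the
derivation at any level `ρ < ε/2`, because `f` is small on weakly small vectors. Applied with
`f ∈ K`, it shows that `(f + f₀)/2` survives `ζ` steps at level `ε/4` for every `f ∈ K`; applied
once more with `f = f₀`, it shows that `f₀ = (f₀ + f₀)/2` survives `ζ + ζ` steps.
-/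

open Set

section derivIter

variable {α : Type*} {d : Set α → Set α} {A : Set α}

@[simp] lemma derivIter_zero (d : Set α → Set α) (A : Set α) : derivIter d A 0 = A :=
  Ordinal.limitRecOn_zero ..

@[simp] lemma derivIter_add_one (d : Set α → Set α) (A : Set α) (γ : Ordinal) :
    derivIter d A (γ + 1) = d (derivIter d A γ) :=
  Ordinal.limitRecOn_add_one ..

lemma derivIter_limit (d : Set α → Set α) (A : Set α) {γ : Ordinal} (hγ : Order.IsSuccLimit γ) :
    derivIter d A γ = ⋂ β : Iio γ, derivIter d A β :=
  Ordinal.limitRecOn_limit _ _ _ _ hγ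

lemma derivIter_anti (hd : ∀ C, d C ⊆ C) : Antitone (derivIter d A) := by
  intro β γ hβγ
  induction γ using Ordinal.limitRecOn with
  | zero => rw [nonpos_iff_eq_zero.mp hβγ]
  | add_one γ ih =>
    rcases Order.le_succ_iff_eq_or_le.mp hβγ with rfl | hβγ
    · exact subset_rfl
    · rw [derivIter_add_one]
      exact (hd _).trans (ih hβγ)
  | limit γ hγ ih =>
    rcases hβγ.eq_or_lt with rfl | hβγ
    · exact subset_rfl
    · rw [derivIter_limit d A hγ]
      exact iInter_subset (fun β : Iio γ => derivIter d A β) ⟨β, hβγ⟩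

lemma derivIter_subset (hd : ∀ C, d C ⊆ C) (γ : Ordinal) : derivIter d A γ ⊆ A := by
  simpa using derivIter_anti (A := A) hd (show (0 : Ordinal) ≤ γ from zero_le)

lemma derivIter_image_subset {β : Type*} {e : Set β → Set β} {B : Set β} (T : Set α → Set β)
    (hT : Monotone T) (he : Monotone e) (hstep : ∀ C, T (d C) ⊆ e (T C)) (hAB : T A ⊆ B)
    (γ : Ordinal) : T (derivIter d A γ) ⊆ derivIter e B γ := by
  induction γ using Ordinal.limitRecOn with
  | zero => simpa using hAB
  | add_one γ ih => simpa using (hstep _).trans (he ih)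
  | limit γ hγ ih =>
    rw [derivIter_limit d A hγ, derivIter_limit e B hγ]
    exact subset_iInter fun β => (hT (iInter_subset _ β)).trans (ih β β.2)

lemma derivIter_derivIter_subset (hmono : Monotone d) (hd : ∀ C, d C ⊆ C) (β γ : Ordinal) :
    derivIter d (derivIter d A β) γ ⊆ derivIter d A (β + γ) := by
  induction γ using Ordinal.limitRecOn with
  | zero => simp
  | add_one γ ih => simpa [← add_assoc] using hmono ih
  | limit γ hγ ih =>
    rw [derivIter_limit d _ hγ, derivIter_limit d A (Ordinal.isSuccLimit_add β hγ)]
    refine subset_iInter fun ⟨η, hη⟩ => ?_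
    rcases le_or_gt η β with hηβ | hβη
    · exact (iInter_subset _ ⟨0, hγ.bot_lt⟩).trans
        ((add_zero β ▸ ih 0 hγ.bot_lt).trans (derivIter_anti hd hηβ))
    · obtain ⟨κ, rfl⟩ := exists_add_of_le hβη.le
      have hκ : κ < γ := (add_lt_add_iff_left β).mp hη
      exact (iInter_subset _ ⟨κ, hκ⟩).trans (ih κ hκ)

variable [TopologicalSpace α]

lemma isClosed_derivIter (hd : ∀ C, IsClosed C → IsClosed (d C)) (hA : IsClosed A)
    (γ : Ordinal) : IsClosed (derivIter d A γ) := by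
  induction γ using Ordinal.limitRecOn with
  | zero => simpa using hA
  | add_one γ ih => simpa using hd _ ih
  | limit γ hγ ih => exact derivIter_limit d A hγ ▸ isClosed_iInter fun β => ih β β.2

lemma derivIter_inter_nonempty_of_isSuccLimit {γ : Ordinal} (hγ : Order.IsSuccLimit γ)
    (hd : ∀ C, d C ⊆ C) (hcl : ∀ β < γ, IsClosed (derivIter d A β)) (hA : IsCompact A)
    {P : Set α} (hP : IsClosed P) (h : ∀ β < γ, (derivIter d A β ∩ P).Nonempty) :
    (derivIter d A γ ∩ P).Nonempty := by
  have : Nonempty (Iio γ) := ⟨⟨0, hγ.bot_lt⟩⟩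
  obtain ⟨f, hf⟩ := IsCompact.nonempty_iInter_of_directed_nonempty_isCompact_isClosed
    (fun β : Iio γ => derivIter d A β ∩ P)
    (directed_of_isDirected_le fun _ _ hβ => inter_subset_inter_left _ (derivIter_anti hd hβ))
    (fun β => h β β.2)
    (fun β => hA.of_isClosed_subset ((hcl β β.2).inter hP) (inter_subset_left.trans
      (derivIter_subset hd β.1)))
    (fun β => (hcl β β.2).inter hP)
  rw [mem_iInter] at hf
  exact ⟨f, derivIter_limit d A hγ ▸ mem_iInter.mpr fun β => (hf β).1, (hf ⟨0, hγ.bot_lt⟩).2⟩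

end derivIter

lemma derivD_subset {Λ : Type*} (D : Set (Set Λ)) (H : Set (List Λ)) : derivD D H ⊆ H :=
  fun _ ht => ht.1

lemma derivD_mono {Λ : Type*} (D : Set (Set Λ)) : Monotone (derivD D) :=
  fun _ _ hHH' _ ht => ⟨hHH' ht.1, fun U hU =>
    let ⟨x, hxU, hx⟩ := ht.2 U hU
    ⟨x, hxU, hHH' hx⟩⟩

section WeakDual

variable {X : Type*} [NormedAddCommGroup X] [NormedSpace ℝ X]

lemma univ_mem_weakBasis : (univ : Set X) ∈ weakBasis X :=
  ⟨∅, 1, one_pos, by simp⟩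

lemma setOf_abs_lt_mem_weakBasis (φ : StrongDual ℝ X) {θ : ℝ} (hθ : 0 < θ) :
    {x : X | |φ x| < θ} ∈ weakBasis X :=
  ⟨{φ}, θ, hθ, by simp⟩

lemma exists_weakBasis_subset_inter {U₁ U₂ : Set X} (h₁ : U₁ ∈ weakBasis X)
    (h₂ : U₂ ∈ weakBasis X) : ∃ U ∈ weakBasis X, U ⊆ U₁ ∩ U₂ := by
  classical
  obtain ⟨F₁, θ₁, hθ₁, rfl⟩ := h₁
  obtain ⟨F₂, θ₂, hθ₂, rfl⟩ := h₂
  refine ⟨_, ⟨F₁ ∪ F₂, min θ₁ θ₂, lt_min hθ₁ hθ₂, rfl⟩, fun x hx => ⟨?_, ?_⟩⟩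
  · exact fun f hf => (hx f (Finset.mem_union_left _ hf)).trans_le (min_le_left _ _)
  · exact fun f hf => (hx f (Finset.mem_union_right _ hf)).trans_le (min_le_right _ _)

lemma midpoint_apply (f g : WeakDual ℝ X) (x : X) : midpoint ℝ f g x = (f x + g x) / 2 := by
  rw [midpoint_eq_smul_add]
  change (⅟2 : ℝ) * (f x + g x) = _
  simp [div_eq_inv_mul]

lemma continuous_midpoint_left (g : WeakDual ℝ X) :
    Continuous fun f : WeakDual ℝ X => midpoint ℝ f g := by
  simp only [midpoint_eq_smul_add]
  fun_prop

def dualDeriv (ρ : ℝ) (C : Set (WeakDual ℝ X)) : Set (WeakDual ℝ X) :=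
  {f ∈ C | ∀ U ∈ weakBasis X, f ∈ closure {g ∈ C | ∃ x ∈ U, ‖x‖ ≤ 1 ∧ ρ ≤ g x}}

lemma dualDeriv_subset (ρ : ℝ) (C : Set (WeakDual ℝ X)) : dualDeriv ρ C ⊆ C :=
  fun _ hf => hf.1

lemma dualDeriv_mono (ρ : ℝ) : Monotone (dualDeriv (X := X) ρ) := by
  intro _ _ hCC' _ hf
  refine ⟨hCC' hf.1, fun U hU => closure_mono ?_ (hf.2 U hU)⟩
  exact fun _ hg => ⟨hCC' hg.1, hg.2⟩

lemma isClosed_dualDeriv (ρ : ℝ) {C : Set (WeakDual ℝ X)} (hC : IsClosed C) :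
    IsClosed (dualDeriv ρ C) := by
  have : dualDeriv ρ C = C ∩ ⋂ U ∈ weakBasis X,
      closure {g ∈ C | ∃ x ∈ U, ‖x‖ ≤ 1 ∧ ρ ≤ g x} := by
    ext f
    simp only [dualDeriv, mem_inter_iff, mem_iInter₂]
    rfl
  exact this ▸ hC.inter (isClosed_biInter fun U _ => isClosed_closure)

lemma isClosed_setOf_forall_le (t : List X) (ε : ℝ) :
    IsClosed {g : WeakDual ℝ X | ∀ x ∈ t, ε ≤ g x} := by
  simp only [ofPred_forall]
  exact isClosed_biInter fun x _ => isClosed_le continuous_const (WeakDual.eval_continuous x)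

lemma isOpen_setOf_forall_lt (t : List X) (σ : ℝ) :
    IsOpen {g : WeakDual ℝ X | ∀ x ∈ t, σ < g x} := by
  simp only [ofPred_forall]
  exact (List.finite_toSet t).isOpen_biInter fun x _ =>
    isOpen_lt continuous_const (WeakDual.eval_continuous x)

lemma dualDeriv_inter_nonempty {ρ : ℝ} {C P : Set (WeakDual ℝ X)} (hC : IsCompact C)
    (hP : IsClosed P) (h : ∀ U ∈ weakBasis X, ∃ g ∈ C ∩ P, ∃ x ∈ U, ‖x‖ ≤ 1 ∧ ρ ≤ g x) :
    (dualDeriv ρ C ∩ P).Nonempty := by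
  set S : Set X → Set (WeakDual ℝ X) := fun U => {g ∈ C ∩ P | ∃ x ∈ U, ‖x‖ ≤ 1 ∧ ρ ≤ g x}
  have hS_mono : Monotone S := fun _ _ hUV _ ⟨hg, x, hx, hx'⟩ => ⟨hg, x, hUV hx, hx'⟩
  have hS_subset : ∀ U, closure (S U) ⊆ C ∩ P :=
    fun U => closure_minimal (fun _ hg => hg.1) (hC.isClosed.inter hP)
  have : Nonempty (weakBasis X) := ⟨⟨univ, univ_mem_weakBasis⟩⟩
  obtain ⟨f, hf⟩ := IsCompact.nonempty_iInter_of_directed_nonempty_isCompact_isClosed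
    (fun U : weakBasis X => closure (S U))
    (fun U₁ U₂ => by
      obtain ⟨U, hU, hsub⟩ := exists_weakBasis_subset_inter U₁.2 U₂.2
      exact ⟨⟨U, hU⟩, closure_mono (hS_mono (hsub.trans inter_subset_left)),
        closure_mono (hS_mono (hsub.trans inter_subset_right))⟩)
    (fun U => let ⟨g, hg, hgx⟩ := h U U.2; ⟨g, subset_closure ⟨hg, hgx⟩⟩)
    (fun U => hC.of_isClosed_subset isClosed_closure ((hS_subset U).trans inter_subset_left))
    (fun _ => isClosed_closure)
  rw [mem_iInter] at hf
  obtain ⟨hfC, hfP⟩ := hS_subset _ (hf ⟨univ, univ_mem_weakBasis⟩)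
  refine ⟨f, ⟨hfC, fun U hU => closure_mono ?_ (hf ⟨U, hU⟩)⟩, hfP⟩
  exact fun g hg => ⟨hg.1.1, hg.2⟩

lemma exists_mem_derivIter_dualDeriv {K : Set (StrongDual ℝ X)}
    (hK : IsCompact (StrongDual.toWeakDual '' K)) {ε : ℝ} (γ : Ordinal) {t : List X}
    (ht : t ∈ derivIter (derivD (weakBasis X)) (HKtree K ε) γ) :
    ∃ f ∈ derivIter (dualDeriv ε) (StrongDual.toWeakDual '' K) γ, ∀ x ∈ t, ε ≤ f x := by
  have hcl := isClosed_derivIter (fun _ hC => isClosed_dualDeriv ε hC) hK.isClosed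
  change (_ ∩ {g : WeakDual ℝ X | ∀ x ∈ t, ε ≤ g x}).Nonempty
  induction γ using Ordinal.limitRecOn generalizing t with
  | zero =>
    rw [derivIter_zero] at ht ⊢
    obtain ⟨-, f, hfK, hf⟩ := ht
    exact ⟨StrongDual.toWeakDual f, mem_image_of_mem _ hfK, hf⟩
  | add_one γ ih =>
    rw [derivIter_add_one] at ht ⊢
    refine dualDeriv_inter_nonempty
      (hK.of_isClosed_subset (hcl γ) (derivIter_subset (dualDeriv_subset ε) γ))
      (isClosed_setOf_forall_le t ε) fun U hU => ?_
    obtain ⟨x, hxU, hx⟩ := ht.2 U hU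
    obtain ⟨g, hg, hgx⟩ := ih hx
    have hx1 : ‖x‖ ≤ 1 := (derivIter_subset (derivD_subset _) γ hx).1 x (by simp)
    exact ⟨g, ⟨hg, fun v hv => hgx v (by simp [hv])⟩, x, hxU, hx1, hgx x (by simp)⟩
  | limit γ hγ ih =>
    rw [derivIter_limit _ _ hγ, mem_iInter] at ht
    exact derivIter_inter_nonempty_of_isSuccLimit hγ (dualDeriv_subset ε) (fun β _ => hcl β) hK
      (isClosed_setOf_forall_le t ε) fun β hβ => ih β hβ (ht ⟨β, hβ⟩)

lemma image_midpoint_dualDeriv_subset {ε ρ : ℝ} (hρ : 2 * ρ < ε) (c : WeakDual ℝ X)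
    (C : Set (WeakDual ℝ X)) :
    (midpoint ℝ · c) '' dualDeriv ε C ⊆ dualDeriv ρ ((midpoint ℝ · c) '' C) := by
  rintro _ ⟨f, ⟨hfC, hf⟩, rfl⟩
  refine ⟨mem_image_of_mem _ hfC, fun U hU => ?_⟩
  obtain ⟨V, hV, hVU⟩ := exists_weakBasis_subset_inter hU
    (setOf_abs_lt_mem_weakBasis (WeakDual.toStrongDual c) (by linarith : 0 < ε - 2 * ρ))
  refine map_mem_closure (f := (midpoint ℝ · c)) (continuous_midpoint_left c) (hf V hV) ?_
  rintro g ⟨hgC, x, hxV, hx1, hgx⟩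
  have hcx : |c x| < ε - 2 * ρ := (hVU hxV).2
  refine ⟨mem_image_of_mem _ hgC, x, (hVU hxV).1, hx1, ?_⟩
  rw [midpoint_apply]
  linarith [neg_abs_le (c x)]

lemma mem_derivIter_dualDeriv_add_self {A : Set (WeakDual ℝ X)} (hA : Convex ℝ A) {ε ρ : ℝ}
    (hρ : 2 * ρ < ε) {ζ : Ordinal} {f₀ : WeakDual ℝ X}
    (hf₀ : f₀ ∈ derivIter (dualDeriv ε) A ζ) : f₀ ∈ derivIter (dualDeriv ρ) A (ζ + ζ) := by
  have image_subset (c : WeakDual ℝ X) (B : Set (WeakDual ℝ X))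
      (hB : (midpoint ℝ · c) '' A ⊆ B) :
      (midpoint ℝ · c) '' derivIter (dualDeriv ε) A ζ ⊆ derivIter (dualDeriv ρ) B ζ :=
    derivIter_image_subset _ (fun _ _ h => image_mono h) (dualDeriv_mono ρ)
      (image_midpoint_dualDeriv_subset hρ c) hB ζ
  have hmid_mem : ∀ f ∈ A, midpoint ℝ f f₀ ∈ derivIter (dualDeriv ρ) A ζ := fun f hf =>
    midpoint_comm (R := ℝ) f₀ f ▸ image_subset f A
      (image_subset_iff.mpr fun _ hg => hA.midpoint_mem hg hf) (mem_image_of_mem _ hf₀)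
  have h := image_subset f₀ _ (image_subset_iff.mpr hmid_mem) (mem_image_of_mem _ hf₀)
  rw [midpoint_self] at h
  exact derivIter_derivIter_subset (dualDeriv_mono ρ) (dualDeriv_subset ρ) ζ ζ h

def dualTree (C : Set (WeakDual ℝ X)) (σ : ℝ) : Set (List X) :=
  {t | (∀ x ∈ t, ‖x‖ ≤ 1) ∧ ∃ f ∈ C, ∀ x ∈ t, σ < f x}

lemma dualTree_mono (σ : ℝ) : Monotone fun C : Set (WeakDual ℝ X) => dualTree C σ :=
  fun _ _ hCC' _ ⟨ht, f, hf, hft⟩ => ⟨ht, f, hCC' hf, hft⟩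

lemma dualTree_dualDeriv_subset {σ ρ : ℝ} (hσρ : σ < ρ) (C : Set (WeakDual ℝ X)) :
    dualTree (dualDeriv ρ C) σ ⊆ derivD (weakBasis X) (dualTree C σ) := by
  rintro t ⟨ht, f, ⟨hfC, hf⟩, hft⟩
  refine ⟨⟨ht, f, hfC, hft⟩, fun U hU => ?_⟩
  obtain ⟨g, hgt, hgC, x, hxU, hx1, hgx⟩ :=
    mem_closure_iff.mp (hf U hU) _ (isOpen_setOf_forall_lt t σ) hft
  refine ⟨x, hxU, ?_, g, hgC, ?_⟩
  · simpa [or_imp, forall_and] using ⟨ht, hx1⟩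
  · simpa [or_imp, forall_and] using ⟨hgt, hσρ.trans_le hgx⟩

lemma dualTree_derivIter_subset {K : Set (StrongDual ℝ X)} {σ ρ : ℝ} (hσρ : σ < ρ)
    (γ : Ordinal) :
    dualTree (derivIter (dualDeriv ρ) (StrongDual.toWeakDual '' K) γ) σ ⊆
      derivIter (derivD (weakBasis X)) (HKtree K σ) γ := by
  refine derivIter_image_subset (dualTree · σ) (dualTree_mono σ) (derivD_mono _)
    (dualTree_dualDeriv_subset hσρ) ?_ γ
  rintro t ⟨ht, _, ⟨f, hfK, rfl⟩, hft⟩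
  exact ⟨ht, f, hfK, fun x hx => (hft x hx).le⟩

end WeakDual

theorem ordW_double_general {X : Type*} [NormedAddCommGroup X] [NormedSpace ℝ X]
    (K : Set (StrongDual ℝ X))
    (hcomp : IsCompact ((fun f => StrongDual.toWeakDual f) '' K)) (hconv : Convex ℝ K)
    (ε δ : ℝ) (hδ : 0 < δ) (hδε : δ < ε / 8) (ζ : Ordinal)
    (h : (derivIter (derivD (weakBasis X)) (HKtree K ε) ζ).Nonempty) :
    (derivIter (derivD (weakBasis X)) (HKtree K δ) (ζ * 2)).Nonempty := by
  obtain ⟨t, ht⟩ := h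
  obtain ⟨f₀, hf₀, -⟩ := exists_mem_derivIter_dualDeriv hcomp ζ ht
  have hconv' : Convex ℝ (StrongDual.toWeakDual '' K) :=
    hconv.linear_image StrongDual.toWeakDual.toLinearMap
  have hf₀_double := mem_derivIter_dualDeriv_add_self hconv' (by linarith : 2 * (ε / 4) < ε) hf₀
  rw [Ordinal.mul_two]
  exact ⟨[], dualTree_derivIter_subset (by linarith : δ < ε / 4) _
    ⟨by simp, f₀, hf₀_double, by simp⟩⟩

theorem ordW_double {X : Type*} [NormedAddCommGroup X] [NormedSpace ℝ X]
    [CompleteSpace X] (K : Set (StrongDual ℝ X)) (hne : K.Nonempty)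
    (hcomp : IsCompact ((fun f => StrongDual.toWeakDual f) '' K)) (hconv : Convex ℝ K)
    (ε δ : ℝ) (hδ : 0 < δ) (hδε : δ < ε / 8) (ζ : Ordinal)
    (h : (derivIter (derivD (weakBasis X)) (HKtree K ε) ζ).Nonempty) :
    (derivIter (derivD (weakBasis X)) (HKtree K δ) (ζ * 2)).Nonempty :=
  ordW_double_general K hcomp hconv ε δ hδ hδε ζ h
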